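/- Let n, m, k be positive integers with 2m ≥ n+1, and let (α_i)_{i=0}^{k+m} be nonnegative reals with ∑_{i=0}^{k+m} α_i (i+1) = 2(k+m+2). Define a_i = (\frac{i+1}{2(k+m+2)} - \frac{i}{n} - \frac{1}{n+1}) / (\frac{1}{2} - \frac{k+m+1}{n} - \frac{1}{n+1}). Then ∑_{i=0}^{k+m} α_i a_i ≤ 2 - 4/((k+m+1)·(2(k+m+1)(n+1) - n(n-1))) < 2. -/

import Mathlib

/-!
Each exponent is affine in `i + 1`: its numerator is `(1/(2(K+1)) - 1/n)(i+1) + (1/n - 1/(n+1))`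
with `K = k + m + 1`, and its denominator `1/2 - K/n - 1/(n+1)` is negative because `2m ≥ n + 1`.
So `∑ αᵢ aᵢ` is determined by `∑ αᵢ (i+1) = 2(K+1)` and `∑ αᵢ`, decreasing in the latter, and
`∑ αᵢ ≥ ∑ αᵢ (i+1)/K = 2(K+1)/K` turns it into the explicit bound.
-/

open Finset

theorem sum_mul_succ_le_mul_sum {L : ℕ} {α : ℕ → ℝ} (hα : ∀ i ∈ range L, 0 ≤ α i) :
    ∑ i ∈ range L, α i * ((i : ℝ) + 1) ≤ L * ∑ i ∈ range L, α i := by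
  rw [mul_sum]
  refine sum_le_sum fun i hi => ?_
  have hi' : (i : ℝ) + 1 ≤ L := by exact_mod_cast mem_range.mp hi
  rw [mul_comm (L : ℝ)]
  exact mul_le_mul_of_nonneg_left hi' (hα i hi)

theorem sum_mul_affine_div {ι : Type*} (s : Finset ι) (α f : ι → ℝ) (A B D : ℝ) :
    ∑ i ∈ s, α i * ((A * f i + B) / D) = (A * ∑ i ∈ s, α i * f i + B * ∑ i ∈ s, α i) / D := by
  rw [mul_sum, mul_sum, ← sum_add_distrib, sum_div]
  exact sum_congr rfl fun i _ => by ring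

theorem exponent_gap_pos {N K : ℝ} (hN : 0 ≤ N) (hNK : N < 2 * K) :
    0 < 2 * K * (N + 1) - N * (N - 1) := by
  nlinarith

theorem exponent_denominator_eq {N K : ℝ} (hN : N ≠ 0) (hN1 : N + 1 ≠ 0) :
    1 / 2 - K / N - 1 / (N + 1) = -(2 * K * (N + 1) - N * (N - 1)) / (2 * N * (N + 1)) := by
  field_simp
  ring

theorem affine_exponent_bound {N K S : ℝ} (hN : 0 < N) (hK : 0 < K) (hNK : N < 2 * K)
    (hS : 2 * (K + 1) / K ≤ S) :
    ((1 / (2 * (K + 1)) - 1 / N) * (2 * (K + 1)) + (1 / N - 1 / (N + 1)) * S) /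
        (1 / 2 - K / N - 1 / (N + 1))
      ≤ 2 - 4 / (K * (2 * K * (N + 1) - N * (N - 1))) := by
  have hM := exponent_gap_pos hN.le hNK
  rw [exponent_denominator_eq hN.ne' (by linarith)]
  have hD : -(2 * K * (N + 1) - N * (N - 1)) / (2 * N * (N + 1)) ≤ 0 :=
    div_nonpos_of_nonpos_of_nonneg (by linarith) (by positivity)
  have hB : 0 ≤ 1 / N - 1 / (N + 1) :=
    sub_nonneg.mpr (one_div_le_one_div_of_le hN (by linarith))
  calc _ ≤ ((1 / (2 * (K + 1)) - 1 / N) * (2 * (K + 1)) + (1 / N - 1 / (N + 1)) * (2 * (K + 1) / K)) /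
          (-(2 * K * (N + 1) - N * (N - 1)) / (2 * N * (N + 1))) :=
        div_le_div_of_nonpos_of_le hD (by gcongr)
    _ = _ := by
        field_simp
        ring

theorem exponent_sum_lt_two_general (n m k : ℕ) (hn : 0 < n)
    (hmn : 2 * m ≥ n + 1)
    (α : ℕ → ℝ) (hα : ∀ i, 0 ≤ α i)
    (hsum : ∑ i ∈ range (k + m + 1), α i * ((i : ℝ) + 1) = 2 * ((k : ℝ) + m + 2)) :
    (∑ i ∈ range (k + m + 1), α i *
        ((((i : ℝ) + 1) / (2 * ((k : ℝ) + m + 2)) - (i : ℝ) / n - 1 / ((n : ℝ) + 1)) /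
          (1 / 2 - ((k : ℝ) + m + 1) / n - 1 / ((n : ℝ) + 1))))
      ≤ 2 - 4 / (((k : ℝ) + m + 1) * (2 * ((k : ℝ) + m + 1) * ((n : ℝ) + 1) - n * ((n : ℝ) - 1)))
    ∧ 2 - 4 / (((k : ℝ) + m + 1) * (2 * ((k : ℝ) + m + 1) * ((n : ℝ) + 1) - n * ((n : ℝ) - 1)))
        < 2 := by
  set K : ℝ := (k : ℝ) + m + 1
  have hK2 : (k : ℝ) + m + 2 = K + 1 := by ring
  rw [hK2] at hsum ⊢
  have hN : (0 : ℝ) < n := by exact_mod_cast hn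
  have hKpos : 0 < K := by positivity
  have hNK : (n : ℝ) < 2 * K := by
    have : (n : ℝ) + 1 ≤ 2 * m := by exact_mod_cast hmn
    linarith [k.cast_nonneg (α := ℝ)]
  have hS : 2 * (K + 1) / K ≤ ∑ i ∈ range (k + m + 1), α i := by
    have := sum_mul_succ_le_mul_sum (L := k + m + 1) fun i _ => hα i
    push_cast at this
    rw [div_le_iff₀' hKpos]
    linarith
  have haffine : ∀ i : ℕ,
      ((i : ℝ) + 1) / (2 * (K + 1)) - (i : ℝ) / n - 1 / ((n : ℝ) + 1) =
        (1 / (2 * (K + 1)) - 1 / n) * ((i : ℝ) + 1) + (1 / n - 1 / ((n : ℝ) + 1)) :=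
    fun i => by ring
  rw [sum_congr rfl fun i _ => by rw [haffine i], sum_mul_affine_div, hsum]
  refine ⟨affine_exponent_bound hN hKpos hNK hS, ?_⟩
  have := mul_pos hKpos (exponent_gap_pos hN.le hNK)
  linarith [div_pos four_pos this]

/-- Key combinatorial exponent computation: the total interpolation exponent
∑ αᵢ aᵢ is at most 2 - 4/((k+m+1)(2(k+m+1)(n+1) - n(n-1))) < 2. -/
theorem exponent_sum_lt_two (n m k : ℕ) (hn : 0 < n) (hm : 0 < m) (hk : 0 < k)
    (hmn : 2 * m ≥ n + 1)
    (α : ℕ → ℝ) (hα : ∀ i, 0 ≤ α i)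
    (hsum : ∑ i ∈ range (k + m + 1), α i * ((i : ℝ) + 1) = 2 * ((k : ℝ) + m + 2)) :
    (∑ i ∈ range (k + m + 1), α i *
        ((((i : ℝ) + 1) / (2 * ((k : ℝ) + m + 2)) - (i : ℝ) / n - 1 / ((n : ℝ) + 1)) /
          (1 / 2 - ((k : ℝ) + m + 1) / n - 1 / ((n : ℝ) + 1))))
      ≤ 2 - 4 / (((k : ℝ) + m + 1) * (2 * ((k : ℝ) + m + 1) * ((n : ℝ) + 1) - n * ((n : ℝ) - 1)))
    ∧ 2 - 4 / (((k : ℝ) + m + 1) * (2 * ((k : ℝ) + m + 1) * ((n : ℝ) + 1) - n * ((n : ℝ) - 1)))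
        < 2 :=
  exponent_sum_lt_two_general n m k hn hmn α hα hsum
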